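/- Let v₁ = ((m_1,r_1),…,(m_{n₁},r_{n₁})) and v₂ = ((m_1',r_1'),…,(m_{n₂}',r_{n₂}')) be lists of disk data with all radii > 0, such that both sums H_{v₁}, H_{v₂} : S¹ → ℕ are properly upper semicontinuous, every boundary trace of a signal in v₁ or v₂ has exactly 0 or exactly 2 elements, and the set {x ∈ S¹ : H_{v₁}(x) ≠ H_{v₂}(x)} is finite. Then for every integer N with N ≥ n₁ and N ≥ n₂, DoF_N(v₁) = DoF_N(v₂). -/

import Mathlib

noncomputable section

open scoped BigOperators
open Classical

/-- The unit circle `S¹` in the plane (modeled as `ℂ ≅ ℝ²` with the Euclidean norm). -/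
def S1 : Set ℂ := {x : ℂ | ‖x‖ = 1}

/-- The signal function `h_{(m,r)}`: indicator of the closed disk of center `m`, radius `r`. -/
def signal (m : ℂ) (r : ℝ) (x : ℂ) : ℕ := if ‖x - m‖ ≤ r then 1 else 0

/-- The boundary trace `∂h_{(m,r)} = {x ∈ S¹ : ‖x − m‖ = r}`. -/
def bTrace (m : ℂ) (r : ℝ) : Set ℂ := {x : ℂ | ‖x‖ = 1 ∧ ‖x - m‖ = r}

/-- The sum `H_v` of the signal functions of the disk data `v = ((m_i, r_i))_{i<n}`. -/
def Hsum {n : ℕ} (v : Fin n → ℂ × ℝ) (x : ℂ) : ℕ := ∑ i, signal (v i).1 (v i).2 x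

/-- Rotation of the plane by angle `t` about the origin. -/
def rot (t : ℝ) (x : ℂ) : ℂ := Complex.exp (t * Complex.I) * x

/-- `H(x⁺) = a`: `H` equals `a` just after `x` (counterclockwise). -/
def rightVal (H : ℂ → ℕ) (x : ℂ) (a : ℕ) : Prop :=
  ∃ δ > (0 : ℝ), ∀ t : ℝ, 0 < t → t < δ → H (rot t x) = a

/-- `H(x⁻) = b`: `H` equals `b` just before `x`. -/
def leftVal (H : ℂ → ℕ) (x : ℂ) (b : ℕ) : Prop :=
  ∃ δ > (0 : ℝ), ∀ t : ℝ, -δ < t → t < 0 → H (rot t x) = b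

/-- `H` is properly upper semicontinuous on `S¹`: at each point both one-sided limits
exist and the value equals their maximum. -/
def ProperlyUSC (H : ℂ → ℕ) : Prop :=
  ∀ x ∈ S1, ∃ a b : ℕ, rightVal H x a ∧ leftVal H x b ∧ H x = max a b

/-- `H* = max_{S¹} H`. -/
def maxOnCircle (H : ℂ → ℕ) : ℕ := sSup (H '' S1)

/-- `H_* = min_{S¹} H`. -/
def minOnCircle (H : ℂ → ℕ) : ℕ := sInf (H '' S1)

/-- The superlevel set `{x ∈ S¹ : H(x) ≥ k}`. -/
def superlevel (H : ℂ → ℕ) (k : ℕ) : Set ℂ := {x ∈ S1 | k ≤ H x}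

/-- Number of connected components of a subset of the plane. -/
def numCC (A : Set ℂ) : ℕ := Nat.card (ConnectedComponents ↥A)

/-- `τ(H) = Σ_{k=H_*+1}^{H*} (c_k(H) − 1)`. -/
def tau (H : ℂ → ℕ) : ℕ :=
  ∑ k ∈ Finset.Icc (minOnCircle H + 1) (maxOnCircle H), (numCC (superlevel H k) - 1)

/-- `ρ` for the degrees-of-freedom count. -/
def rho (m : ℂ) (r : ℝ) : ℕ :=
  if bTrace m r = ∅ then 3
  else if (bTrace m r).ncard = 1 ∨ (bTrace m r).ncard = 2 then 1
  else 0

/-- `N`-degrees of freedom of a decomposition with `n ≤ N` signals. -/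
def DoF (N : ℕ) {n : ℕ} (v : Fin n → ℂ × ℝ) : ℕ :=
  3 * (N - n) + ∑ i, rho (v i).1 (v i).2

/-!
Fix `x ∈ S¹`. A signal whose trace is empty or misses `x` is constant near `x`; if `x` lies on a
two-point trace, the circle `‖y - m‖ = r` crosses `S¹` transversally at `x` (a tangency would make
`x` the only trace point), so exactly one side of `x` lies in the disk. Summing,
`H(x⁺) + H(x⁻) + μ(x) = 2 H(x)`, where `μ(x)` counts the traces through `x`. Two decompositions
agreeing off a finite set have the same one-sided limits everywhere, hence by proper upper
semicontinuity the same values, hence the same `μ`. Summing `μ` over `S¹` gives `Σᵢ |∂hᵢ|`, and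
`ρᵢ = 3 - |∂hᵢ|` for traces of size `0` or `2`, so `DoF_N(v) = 3N - Σᵢ |∂hᵢ|`.
-/

open Filter Topology

lemma norm_rot (t : ℝ) (x : ℂ) : ‖rot t x‖ = ‖x‖ := by
  rw [rot, norm_mul, Complex.norm_exp_ofReal_mul_I, one_mul]

lemma rot_mem_S1 {x : ℂ} (hx : x ∈ S1) (t : ℝ) : rot t x ∈ S1 :=
  (norm_rot t x).trans hx

lemma rot_zero (x : ℂ) : rot 0 x = x := by simp [rot]

lemma continuous_rot (x : ℂ) : Continuous fun t : ℝ => rot t x := by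
  unfold rot; fun_prop

lemma rightVal_iff {H : ℂ → ℕ} {x : ℂ} {a : ℕ} :
    rightVal H x a ↔ ∀ᶠ t in 𝓝[>] 0, H (rot t x) = a := by
  simp only [(nhdsGT_basis (0 : ℝ)).eventually_iff, rightVal, Set.mem_Ioo, and_imp, gt_iff_lt]

lemma leftVal_iff {H : ℂ → ℕ} {x : ℂ} {b : ℕ} :
    leftVal H x b ↔ ∀ᶠ t in 𝓝[<] 0, H (rot t x) = b := by
  simp only [(nhdsLT_basis (0 : ℝ)).eventually_iff, leftVal, Set.mem_Ioo, and_imp, gt_iff_lt]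
  constructor
  · rintro ⟨δ, hδ, h⟩
    exact ⟨-δ, neg_lt_zero.2 hδ, h⟩
  · rintro ⟨ε, hε, h⟩
    exact ⟨-ε, neg_pos.2 hε, by simpa using h⟩

lemma eventually_rot_ne {x : ℂ} (hx : x ≠ 0) (y : ℂ) : ∀ᶠ t in 𝓝[≠] 0, rot t x ≠ y := by
  rcases eq_or_ne x y with rfl | hxy
  · have hpi : ∀ᶠ t in 𝓝[≠] (0 : ℝ), t ∈ Set.Ioo (-Real.pi) Real.pi :=
      nhdsWithin_le_nhds (Ioo_mem_nhds (neg_neg_of_pos Real.pi_pos) Real.pi_pos)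
    filter_upwards [hpi, self_mem_nhdsWithin] with t ht ht0 hrot
    have hexp : Complex.exp (t * Complex.I) = 1 := mul_eq_right₀ hx |>.1 hrot
    have hsin : Real.sin t = 0 := by
      simpa using congrArg Complex.im hexp
    exact ht0 ((Real.sin_eq_zero_iff_of_lt_of_lt ht.1 ht.2).1 hsin)
  · exact nhdsWithin_le_nhds <|
      (continuous_rot x).continuousAt.eventually_ne (by rwa [rot_zero])

lemma eventually_rot_notMem {F : Set ℂ} (hF : F.Finite) {x : ℂ} (hx : x ≠ 0) :
    ∀ᶠ t in 𝓝[≠] 0, rot t x ∉ F := by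
  filter_upwards [hF.eventually_all.2 fun y _ => eventually_rot_ne hx y] with t ht hmem
  exact ht _ hmem rfl

lemma S1_infinite : S1.Infinite := fun hS1 =>
  have hmem : ∀ t : ℝ, rot t 1 ∈ S1 := rot_mem_S1 (by simp [S1])
  (eventually_rot_notMem hS1 one_ne_zero).exists.elim fun t ht => ht (hmem t)

section OneSidedValues

variable {H₁ H₂ : ℂ → ℕ} {x : ℂ}

lemma eq_of_eventually_rot {l : Filter ℝ} [l.NeBot] (hl : l ≤ 𝓝[≠] 0)
    (hF : {y ∈ S1 | H₁ y ≠ H₂ y}.Finite) (hx : x ∈ S1) {a₁ a₂ : ℕ}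
    (h₁ : ∀ᶠ t in l, H₁ (rot t x) = a₁) (h₂ : ∀ᶠ t in l, H₂ (rot t x) = a₂) : a₁ = a₂ := by
  have hx0 : x ≠ 0 := by
    rintro rfl
    simp [S1] at hx
  obtain ⟨t, ht₁, ht₂, htF⟩ := (h₁.and (h₂.and (hl (eventually_rot_notMem hF hx0)))).exists
  rw [← ht₁, ← ht₂]
  by_contra hne
  exact htF ⟨rot_mem_S1 hx t, hne⟩

lemma rightVal_eq_of_finite (hF : {y ∈ S1 | H₁ y ≠ H₂ y}.Finite) (hx : x ∈ S1) {a₁ a₂ : ℕ}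
    (h₁ : rightVal H₁ x a₁) (h₂ : rightVal H₂ x a₂) : a₁ = a₂ :=
  eq_of_eventually_rot (nhdsGT_le_nhdsNE 0) hF hx
    (rightVal_iff.1 h₁) (rightVal_iff.1 h₂)

lemma leftVal_eq_of_finite (hF : {y ∈ S1 | H₁ y ≠ H₂ y}.Finite) (hx : x ∈ S1) {b₁ b₂ : ℕ}
    (h₁ : leftVal H₁ x b₁) (h₂ : leftVal H₂ x b₂) : b₁ = b₂ :=
  eq_of_eventually_rot (nhdsLT_le_nhdsNE 0) hF hx
    (leftVal_iff.1 h₁) (leftVal_iff.1 h₂)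

lemma ProperlyUSC.eq_of_finite (h₁ : ProperlyUSC H₁) (h₂ : ProperlyUSC H₂)
    (hF : {y ∈ S1 | H₁ y ≠ H₂ y}.Finite) (hx : x ∈ S1) : H₁ x = H₂ x := by
  obtain ⟨a₁, b₁, ha₁, hb₁, hx₁⟩ := h₁ x hx
  obtain ⟨a₂, b₂, ha₂, hb₂, hx₂⟩ := h₂ x hx
  rw [hx₁, hx₂, rightVal_eq_of_finite hF hx ha₁ ha₂, leftVal_eq_of_finite hF hx hb₁ hb₂]

lemma rightVal_sum {ι : Type*} [Fintype ι] {f : ι → ℂ → ℕ} {a : ι → ℕ}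
    (h : ∀ i, rightVal (f i) x (a i)) : rightVal (fun y => ∑ i, f i y) x (∑ i, a i) := by
  simp only [rightVal_iff] at h ⊢
  filter_upwards [eventually_all.2 h] with t ht
  exact Finset.sum_congr rfl fun i _ => ht i

lemma leftVal_sum {ι : Type*} [Fintype ι] {f : ι → ℂ → ℕ} {b : ι → ℕ}
    (h : ∀ i, leftVal (f i) x (b i)) : leftVal (fun y => ∑ i, f i y) x (∑ i, b i) := by
  simp only [leftVal_iff] at h ⊢
  filter_upwards [eventually_all.2 h] with t ht
  exact Finset.sum_congr rfl fun i _ => ht i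

end OneSidedValues

section Signal

open ComplexConjugate

variable {m x : ℂ} {r : ℝ}

lemma sq_norm_sub_of_norm_eq_one {q : ℂ} (hq : ‖q‖ = 1) (m : ℂ) :
    ‖q - m‖ ^ 2 = 1 + ‖m‖ ^ 2 - 2 * (q * conj m).re := by
  rw [Complex.sq_norm, Complex.sq_norm, Complex.normSq_sub, ← Complex.sq_norm q, hq, one_pow]

lemma sq_norm_rot_sub_sub_sq_norm_sub (hx : ‖x‖ = 1) (m : ℂ) (t : ℝ) :
    ‖rot t x - m‖ ^ 2 - ‖x - m‖ ^ 2 = 4 * Real.sin (t / 2) * (rot (t / 2) (x * conj m)).im := by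
  rw [sq_norm_sub_of_norm_eq_one ((norm_rot t x).trans hx), sq_norm_sub_of_norm_eq_one hx,
    show rot t x * conj m = rot t (x * conj m) by simp only [rot, mul_assoc]]
  set w := x * conj m
  obtain ⟨s, rfl⟩ : ∃ s, t = 2 * s := ⟨t / 2, by ring⟩
  simp only [rot, Complex.mul_re, Complex.mul_im, Complex.exp_ofReal_mul_I_re,
    Complex.exp_ofReal_mul_I_im, mul_div_cancel_left₀ s two_ne_zero, Real.cos_two_mul,
    Real.sin_two_mul]
  linear_combination (-4 * w.re) * Real.sin_sq_add_cos_sq s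

lemma im_ne_zero_of_mem_bTrace (hc : (bTrace m r).ncard = 2) (hx : x ∈ bTrace m r) :
    (x * conj m).im ≠ 0 := by
  intro him
  rcases eq_or_ne m 0 with rfl | hm
  · have hS1 : bTrace 0 r = S1 := by
      ext q
      simp only [bTrace, S1, sub_zero, Set.mem_ofPred_eq, ← hx.2, hx.1]
      exact and_iff_left_of_imp id
    rw [hS1, S1_infinite.ncard] at hc
    exact absurd hc (by decide)
  · -- `x conj m` is real of modulus `‖m‖`; every `q conj m` with `q` in the trace has the same
    -- real part and modulus, hence equals it
    have hsub : bTrace m r ⊆ {x} := by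
      rintro q ⟨hq, hqm⟩
      have hre : (q * conj m).re = (x * conj m).re := by
        have h₁ := sq_norm_sub_of_norm_eq_one hq m
        have h₂ := sq_norm_sub_of_norm_eq_one hx.1 m
        rw [hqm] at h₁
        rw [hx.2] at h₂
        linarith
      have hnorm : ‖q * conj m‖ = ‖x * conj m‖ := by
        rw [norm_mul, norm_mul, hq, hx.1]
      have hqim : (q * conj m).im = 0 := by
        rw [← Complex.abs_re_eq_norm, hre, hnorm, Complex.abs_re_eq_norm.2 him]
      exact mul_right_cancel₀ ((map_ne_zero _).2 hm) (Complex.ext hre (hqim.trans him.symm))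
    have := Set.ncard_le_ncard hsub
    rw [Set.ncard_singleton, hc] at this
    exact absurd this (by decide)

lemma eventually_signal_rot_of_ne (hxm : ‖x - m‖ ≠ r) :
    ∀ᶠ t in 𝓝 0, signal m r (rot t x) = signal m r x := by
  have hc : ContinuousAt (fun t : ℝ => ‖rot t x - m‖) 0 :=
    ((continuous_rot x).sub continuous_const).norm.continuousAt
  rcases hxm.lt_or_gt with h | h
  · filter_upwards [hc.eventually_lt continuousAt_const (by rwa [rot_zero])] with t ht
    simp [signal, ht.le, h.le]
  · filter_upwards [continuousAt_const.eventually_lt hc (by rwa [rot_zero])] with t ht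
    simp [signal, not_le.2 ht, not_le.2 h]

lemma eventually_mul_sin_half_pos : ∀ᶠ t in 𝓝[≠] (0 : ℝ), 0 < t * Real.sin (t / 2) := by
  have hpi : ∀ᶠ t in 𝓝[≠] (0 : ℝ), t ∈ Set.Ioo (-Real.pi) Real.pi :=
    nhdsWithin_le_nhds (Ioo_mem_nhds (neg_neg_of_pos Real.pi_pos) Real.pi_pos)
  filter_upwards [hpi, self_mem_nhdsWithin] with t ⟨ht₁, ht₂⟩ ht0
  rcases (show t ≠ 0 from ht0).lt_or_gt with h | h
  · exact mul_pos_of_neg_of_neg h (Real.sin_neg_of_neg_of_neg_pi_lt (by linarith) (by linarith))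
  · exact mul_pos h (Real.sin_pos_of_pos_of_lt_pi (by linarith) (by linarith))

-- `(x * conj m).im` is the derivative of `‖rot t x - m‖ ^ 2 / 2` at `t = 0`.
lemma eventually_signal_rot_of_mem_bTrace (hx : x ∈ bTrace m r) (him : (x * conj m).im ≠ 0) :
    ∀ᶠ t in 𝓝[≠] 0, signal m r (rot t x) = if 0 < t * (x * conj m).im then 0 else 1 := by
  obtain ⟨hx1, rfl⟩ := hx
  set B := (x * conj m).im
  have hφ : ∀ᶠ t in 𝓝 (0 : ℝ), 0 < (rot (t / 2) (x * conj m)).im * B := by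
    refine continuousAt_const.eventually_lt (by unfold rot; fun_prop) ?_
    rw [zero_div, rot_zero]
    exact mul_self_pos.2 him
  filter_upwards [nhdsWithin_le_nhds hφ, eventually_mul_sin_half_pos] with t hφt hsin
  have hprod : 0 < (‖rot t x - m‖ ^ 2 - ‖x - m‖ ^ 2) * (t * B) := by
    rw [sq_norm_rot_sub_sub_sq_norm_sub hx1]
    calc (0 : ℝ) < 4 * ((t * Real.sin (t / 2)) * ((rot (t / 2) (x * conj m)).im * B)) := by
          positivity
      _ = _ := by ring
  have hout : ‖x - m‖ < ‖rot t x - m‖ ↔ 0 < t * B := by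
    rw [← pow_lt_pow_iff_left₀ (norm_nonneg _) (norm_nonneg _) two_ne_zero, ← sub_pos]
    exact pos_iff_pos_of_mul_pos hprod
  simp only [signal, ← not_lt, hout, ite_not]

-- A two-point trace is crossed transversally: exactly one side of a trace point lies in the disk.
lemma signal_sides (hc : bTrace m r = ∅ ∨ (bTrace m r).ncard = 2) (hx : x ∈ S1) :
    ∃ a b : ℕ, rightVal (signal m r) x a ∧ leftVal (signal m r) x b ∧
      a + b + (if x ∈ bTrace m r then 1 else 0) = 2 * signal m r x := by
  by_cases hxm : ‖x - m‖ = r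
  · have hxt : x ∈ bTrace m r := ⟨hx, hxm⟩
    have him := im_ne_zero_of_mem_bTrace
      (hc.resolve_left (Set.nonempty_iff_ne_empty.1 ⟨x, hxt⟩)) hxt
    have hcross := eventually_signal_rot_of_mem_bTrace hxt him
    set B := (x * conj m).im
    refine ⟨if 0 < B then 0 else 1, if B < 0 then 0 else 1, rightVal_iff.2 ?_,
      leftVal_iff.2 ?_, ?_⟩
    · filter_upwards [nhdsGT_le_nhdsNE 0 hcross, self_mem_nhdsWithin] with t ht (htpos : 0 < t)
      simp only [ht, mul_pos_iff_of_pos_left htpos]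
    · filter_upwards [nhdsLT_le_nhdsNE 0 hcross, self_mem_nhdsWithin] with t ht (htneg : t < 0)
      have hsign : 0 < t * B ↔ B < 0 :=
        ⟨fun h => neg_of_mul_pos_right h htneg.le, mul_pos_of_neg_of_neg htneg⟩
      simp only [ht, hsign]
    · rw [if_pos hxt, signal, if_pos hxm.le]
      rcases him.lt_or_gt with h | h <;> simp [h, h.not_gt]
  · have hconst := eventually_signal_rot_of_ne hxm
    refine ⟨_, _, rightVal_iff.2 (nhdsWithin_le_nhds hconst),
      leftVal_iff.2 (nhdsWithin_le_nhds hconst), ?_⟩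
    rw [if_neg fun h => hxm h.2]
    ring

end Signal

lemma sum_ncard_eq_sum_card_filter {α ι : Type*} [Fintype ι] (S : ι → Set α) (T : Finset α)
    (hS : ∀ i, S i ⊆ T) :
    ∑ i, (S i).ncard = ∑ x ∈ T, (Finset.univ.filter fun i => x ∈ S i).card := by
  have hS' : ∀ i, S i = ↑(T.filter fun x => x ∈ S i) := fun i => by
    ext x
    simpa using fun hx => hS i hx
  simp_rw [fun i => congrArg Set.ncard (hS' i), Set.ncard_coe_finset]
  exact Finset.sum_card_bipartiteAbove_eq_sum_card_bipartiteBelow (fun i x => x ∈ S i)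

section Counting

variable {m : ℂ} {r : ℝ} {n : ℕ}

lemma bTrace_finite (hc : bTrace m r = ∅ ∨ (bTrace m r).ncard = 2) : (bTrace m r).Finite := by
  rcases hc with h | h
  · exact h ▸ Set.finite_empty
  · exact Set.finite_of_ncard_ne_zero (by rw [h]; decide)

lemma rho_add_ncard_bTrace (hc : bTrace m r = ∅ ∨ (bTrace m r).ncard = 2) :
    rho m r + (bTrace m r).ncard = 3 := by
  rcases hc with h | h
  · rw [rho, if_pos h, h, Set.ncard_empty]
  · have hne : bTrace m r ≠ ∅ := fun he => by simp [he] at h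
    rw [rho, if_neg hne, if_pos (Or.inr h), h]

lemma DoF_add_sum_ncard_bTrace {v : Fin n → ℂ × ℝ}
    (hc : ∀ i, bTrace (v i).1 (v i).2 = ∅ ∨ (bTrace (v i).1 (v i).2).ncard = 2)
    {N : ℕ} (hN : n ≤ N) : DoF N v + ∑ i, (bTrace (v i).1 (v i).2).ncard = 3 * N := by
  have h3 : ∑ i, (rho (v i).1 (v i).2 + (bTrace (v i).1 (v i).2).ncard) = 3 * n := by
    simp [rho_add_ncard_bTrace (hc _), mul_comm]
  rw [DoF, add_assoc, ← Finset.sum_add_distrib, h3]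
  omega

def traceMult (v : Fin n → ℂ × ℝ) (x : ℂ) : ℕ :=
  (Finset.univ.filter fun i => x ∈ bTrace (v i).1 (v i).2).card

lemma Hsum_sides {v : Fin n → ℂ × ℝ}
    (hc : ∀ i, bTrace (v i).1 (v i).2 = ∅ ∨ (bTrace (v i).1 (v i).2).ncard = 2)
    {x : ℂ} (hx : x ∈ S1) :
    ∃ a b : ℕ, rightVal (Hsum v) x a ∧ leftVal (Hsum v) x b ∧
      a + b + traceMult v x = 2 * Hsum v x := by
  choose a b ha hb hab using fun i => signal_sides (hc i) hx
  refine ⟨∑ i, a i, ∑ i, b i, rightVal_sum ha, leftVal_sum hb, ?_⟩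
  rw [traceMult, Finset.card_filter, Hsum, Finset.mul_sum, ← Finset.sum_add_distrib,
    ← Finset.sum_add_distrib]
  exact Finset.sum_congr rfl fun i _ => hab i

lemma traceMult_eq_of_finite {n₁ n₂ : ℕ} {v₁ : Fin n₁ → ℂ × ℝ} {v₂ : Fin n₂ → ℂ × ℝ}
    (h₁ : ProperlyUSC (Hsum v₁)) (h₂ : ProperlyUSC (Hsum v₂))
    (hc₁ : ∀ i, bTrace (v₁ i).1 (v₁ i).2 = ∅ ∨ (bTrace (v₁ i).1 (v₁ i).2).ncard = 2)
    (hc₂ : ∀ i, bTrace (v₂ i).1 (v₂ i).2 = ∅ ∨ (bTrace (v₂ i).1 (v₂ i).2).ncard = 2)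
    (hF : {x ∈ S1 | Hsum v₁ x ≠ Hsum v₂ x}.Finite) : traceMult v₁ = traceMult v₂ := by
  ext x
  by_cases hx : x ∈ S1
  · obtain ⟨a₁, b₁, ha₁, hb₁, hx₁⟩ := Hsum_sides hc₁ hx
    obtain ⟨a₂, b₂, ha₂, hb₂, hx₂⟩ := Hsum_sides hc₂ hx
    rw [rightVal_eq_of_finite hF hx ha₁ ha₂, leftVal_eq_of_finite hF hx hb₁ hb₂,
      h₁.eq_of_finite h₂ hF hx] at hx₁
    omega
  · have hzero : ∀ {k} (v : Fin k → ℂ × ℝ), traceMult v x = 0 := fun v =>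
      Finset.card_eq_zero.2 (Finset.filter_eq_empty_iff.2 fun _ _ h => hx h.1)
    rw [hzero, hzero]

end Counting

theorem stmt14_general {n₁ n₂ : ℕ} (v₁ : Fin n₁ → ℂ × ℝ) (v₂ : Fin n₂ → ℂ × ℝ)
    (h₁ : ProperlyUSC (Hsum v₁)) (h₂ : ProperlyUSC (Hsum v₂))
    (hc₁ : ∀ i : Fin n₁,
      bTrace (v₁ i).1 (v₁ i).2 = ∅ ∨ (bTrace (v₁ i).1 (v₁ i).2).ncard = 2)
    (hc₂ : ∀ i : Fin n₂,
      bTrace (v₂ i).1 (v₂ i).2 = ∅ ∨ (bTrace (v₂ i).1 (v₂ i).2).ncard = 2)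
    (hfin : {x ∈ S1 | Hsum v₁ x ≠ Hsum v₂ x}.Finite)
    (N : ℕ) (hN₁ : n₁ ≤ N) (hN₂ : n₂ ≤ N) :
    DoF N v₁ = DoF N v₂ := by
  have hT := (Set.finite_iUnion fun i => bTrace_finite (hc₁ i)).union
    (Set.finite_iUnion fun i => bTrace_finite (hc₂ i))
  have hsum : ∑ i, (bTrace (v₁ i).1 (v₁ i).2).ncard = ∑ i, (bTrace (v₂ i).1 (v₂ i).2).ncard := by
    rw [sum_ncard_eq_sum_card_filter _ hT.toFinset fun i => ?_,
      sum_ncard_eq_sum_card_filter _ hT.toFinset fun i => ?_]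
    · exact congrArg (fun μ => ∑ x ∈ hT.toFinset, μ x)
        (traceMult_eq_of_finite h₁ h₂ hc₁ hc₂ hfin)
    all_goals rw [hT.coe_toFinset]
    · exact fun x hx => Or.inr (Set.mem_iUnion.2 ⟨i, hx⟩)
    · exact fun x hx => Or.inl (Set.mem_iUnion.2 ⟨i, hx⟩)
  have hDoF₁ := DoF_add_sum_ncard_bTrace hc₁ hN₁
  have hDoF₂ := DoF_add_sum_ncard_bTrace hc₂ hN₂
  omega

/-- two properly u.s.c. decompositions of the same function (modulo
finite sets), each using only signals whose boundary trace has exactly 0 or 2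
elements, have the same `N`-degrees of freedom. -/
theorem stmt14 {n₁ n₂ : ℕ} (v₁ : Fin n₁ → ℂ × ℝ) (v₂ : Fin n₂ → ℂ × ℝ)
    (hr₁ : ∀ i, 0 < (v₁ i).2) (hr₂ : ∀ i, 0 < (v₂ i).2)
    (h₁ : ProperlyUSC (Hsum v₁)) (h₂ : ProperlyUSC (Hsum v₂))
    (hc₁ : ∀ i : Fin n₁,
      bTrace (v₁ i).1 (v₁ i).2 = ∅ ∨ (bTrace (v₁ i).1 (v₁ i).2).ncard = 2)
    (hc₂ : ∀ i : Fin n₂,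
      bTrace (v₂ i).1 (v₂ i).2 = ∅ ∨ (bTrace (v₂ i).1 (v₂ i).2).ncard = 2)
    (hfin : {x ∈ S1 | Hsum v₁ x ≠ Hsum v₂ x}.Finite)
    (N : ℕ) (hN₁ : n₁ ≤ N) (hN₂ : n₂ ≤ N) :
    DoF N v₁ = DoF N v₂ :=
  stmt14_general v₁ v₂ h₁ h₂ hc₁ hc₂ hfin N hN₁ hN₂
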